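/- Let g, h, m be three Riemannian metrics on a smooth manifold M. For each ordered pair (a,b) of metrics let Γ(a,b) be the difference tensor of Levi-Civita connections and R(a,b)(X,Y)Z = (∇^a_X Γ(a,b))(Y,Z) − (∇^a_Y Γ(a,b))(X,Z) + Γ(a,b)(X, Γ(a,b)(Y,Z)) − Γ(a,b)(Y, Γ(a,b)(X,Z)). Then R(m,g) + R(g,h) + R(h,m) = 0 as (1,3)-tensor fields. -/
import Mathlib


/-- An abstract covariant derivative (affine connection) on the module `V` of
vector fields over the commutative ring `R` of smooth functions on a smooth
manifold `M`, where `act X f` is the derivative of the function `f` along the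
vector field `X`. -/
structure CovariantDeriv (R V : Type*) [CommRing R] [AddCommGroup V]
    [Module R V] [LieRing V] (act : V → R → R) where
  cov : V → V → V
  add_left : ∀ X X' Y, cov (X + X') Y = cov X Y + cov X' Y
  smul_left : ∀ (f : R) (X Y : V), cov (f • X) Y = f • cov X Y
  add_right : ∀ X Y Y', cov X (Y + Y') = cov X Y + cov X Y'
  leibniz : ∀ (f : R) (X Y : V), cov X (f • Y) = f • cov X Y + act X f • Y

/-- A Riemannian metric on the module of vector fields: a symmetric,
nondegenerate, `C^∞(M)`-bilinear form. -/
structure RiemMetric (R V : Type*) [CommRing R] [AddCommGroup V] [Module R V] where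
  form : V → V → R
  symm : ∀ X Y, form X Y = form Y X
  add_left : ∀ X X' Y, form (X + X') Y = form X Y + form X' Y
  smul_left : ∀ (f : R) (X Y : V), form (f • X) Y = f * form X Y
  nondeg : ∀ X, (∀ Y, form X Y = 0) → X = 0

variable {R V : Type*} [CommRing R] [AddCommGroup V] [Module R V] [LieRing V]

/-- A connection is torsion-free if `∇_X Y - ∇_Y X = [X, Y]`. -/
def CovariantDeriv.TorsionFree {act : V → R → R} (D : CovariantDeriv R V act) : Prop :=
  ∀ X Y, D.cov X Y - D.cov Y X = ⁅X, Y⁆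

/-- `D` is the Levi-Civita connection of `g`: torsion-free and metric-compatible. -/
def IsLeviCivita (act : V → R → R) (g : RiemMetric R V)
    (D : CovariantDeriv R V act) : Prop :=
  D.TorsionFree ∧
  ∀ X Y Z, act X (g.form Y Z) = g.form (D.cov X Y) Z + g.form Y (D.cov X Z)

/-- The Riemann curvature operator `R(X,Y)Z` of a connection. -/
def curvOp {act : V → R → R} (D : CovariantDeriv R V act) (X Y Z : V) : V :=
  D.cov X (D.cov Y Z) - D.cov Y (D.cov X Z) - D.cov ⁅X, Y⁆ Z

/-- The difference tensor `Γ(a,b)(X,Y) = ∇^b_X Y - ∇^a_X Y` of two connections. -/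
def diffTensor {act : V → R → R} (Da Db : CovariantDeriv R V act) (X Y : V) : V :=
  Db.cov X Y - Da.cov X Y

/-- Covariant derivative `(∇^a_X Γ(a,b))(Y,Z)` of the difference tensor w.r.t. `Da`. -/
def covDiffTensor {act : V → R → R} (Da Db : CovariantDeriv R V act) (X Y Z : V) : V :=
  Da.cov X (diffTensor Da Db Y Z) - diffTensor Da Db (Da.cov X Y) Z
    - diffTensor Da Db Y (Da.cov X Z)

/-- The relative curvature `R(a,b)(X,Y)Z`. -/
def relCurv {act : V → R → R} (Da Db : CovariantDeriv R V act) (X Y Z : V) : V :=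
  covDiffTensor Da Db X Y Z - covDiffTensor Da Db Y X Z
    + diffTensor Da Db X (diffTensor Da Db Y Z)
    - diffTensor Da Db Y (diffTensor Da Db X Z)

/-- Covariant derivative `(∇_X m)(Y,Z)` of a metric as a `(0,2)`-tensor. -/
def covMetric {act : V → R → R} (D : CovariantDeriv R V act) (m : RiemMetric R V)
    (X Y Z : V) : R :=
  act X (m.form Y Z) - m.form (D.cov X Y) Z - m.form Y (D.cov X Z)

lemma CovariantDeriv.sub_left {act : V → R → R} (D : CovariantDeriv R V act)
    (X X' Y : V) : D.cov (X - X') Y = D.cov X Y - D.cov X' Y := by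
  have h : D.cov (-X') Y = -D.cov X' Y := by
    rw [← neg_one_smul R X', D.smul_left, neg_one_smul]
  rw [sub_eq_add_neg, D.add_left, h, sub_eq_add_neg]

/-- If `Da` is torsion-free, the relative curvature is the difference of the
curvature operators. -/
lemma relCurv_eq_curvOp_sub {act : V → R → R} (Da Db : CovariantDeriv R V act)
    (hDa : Da.TorsionFree) (X Y Z : V) :
    relCurv Da Db X Y Z = curvOp Db X Y Z - curvOp Da X Y Z := by
  have hbr := hDa X Y
  simp only [relCurv, covDiffTensor, diffTensor, curvOp, ← hbr, Da.sub_left,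
    Db.sub_left, Da.add_right, Db.add_right, sub_eq_add_neg] at *
  have hA : Da.cov X (Db.cov Y Z + -Da.cov Y Z) =
      Da.cov X (Db.cov Y Z) + Da.cov X (-Da.cov Y Z) := by
    rw [← Da.add_right]
  have hA' : Da.cov Y (Db.cov X Z + -Da.cov X Z) =
      Da.cov Y (Db.cov X Z) + Da.cov Y (-Da.cov X Z) := by
    rw [← Da.add_right]
  have hB : Db.cov X (Db.cov Y Z + -Da.cov Y Z) =
      Db.cov X (Db.cov Y Z) + Db.cov X (-Da.cov Y Z) := by
    rw [← Db.add_right]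
  have hB' : Db.cov Y (Db.cov X Z + -Da.cov X Z) =
      Db.cov Y (Db.cov X Z) + Db.cov Y (-Da.cov X Z) := by
    rw [← Db.add_right]
  have negA : ∀ W W' : V, Da.cov W (-W') = -Da.cov W W' := by
    intro W W'
    have h0 : Da.cov W 0 = 0 := by
      have := Da.add_right W 0 0
      simpa using this
    have h1 := Da.add_right W W' (-W')
    rw [add_neg_cancel, h0] at h1
    exact eq_neg_of_add_eq_zero_right h1.symm
  have negB : ∀ W W' : V, Db.cov W (-W') = -Db.cov W W' := by
    intro W W'
    have h0 : Db.cov W 0 = 0 := by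
      have := Db.add_right W 0 0
      simpa using this
    have h1 := Db.add_right W W' (-W')
    rw [add_neg_cancel, h0] at h1
    exact eq_neg_of_add_eq_zero_right h1.symm
  have negAl : ∀ W W' : V, Da.cov (-W) W' = -Da.cov W W' := by
    intro W W'
    rw [← neg_one_smul R W, Da.smul_left, neg_one_smul]
  have negBl : ∀ W W' : V, Db.cov (-W) W' = -Db.cov W W' := by
    intro W W'
    rw [← neg_one_smul R W, Db.smul_left, neg_one_smul]
  simp only [hA, hA', hB, hB', negA, negB, Da.add_left, Db.add_left, negAl, negBl]
  abel

/-- Cocycle relation `R(m,g) + R(g,h) + R(h,m) = 0` for relative curvatures. -/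
theorem relCurv_cocycle (act : V → R → R) (g h m : RiemMetric R V)
    (Dg Dh Dm : CovariantDeriv R V act)
    (hg : IsLeviCivita act g Dg) (hh : IsLeviCivita act h Dh)
    (hm : IsLeviCivita act m Dm) :
    ∀ X Y Z, relCurv Dm Dg X Y Z + relCurv Dg Dh X Y Z + relCurv Dh Dm X Y Z = 0 := by
  intro X Y Z
  rw [relCurv_eq_curvOp_sub Dm Dg hm.1, relCurv_eq_curvOp_sub Dg Dh hg.1,
    relCurv_eq_curvOp_sub Dh Dm hh.1]
  abel
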